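/- Let u = g^k e be an occurrence of a repetition in a word S with period g, integer exponent k ≥ 2, and right extension e (a proper prefix of g with the next letter of S after g^k e differing from g[|e|+1]). Under the Sturmian morphism α (α(a) = a^p b, α(b) = a^{p'} b, p ≠ p', min{p,p'} = q): the image occurrence α(g)^k α(e) in α(S) extends on the right by exactly a^q, i.e., the right extension of the reflected repetition is α(e) a^q. -/

import Mathlib

/-- `listPow h m` is the word `h` repeated `m` times. -/
def listPow (h : List Bool) (m : ℕ) : List Bool := (List.replicate m h).flatten

/-- A word is primitive if it is not `h^m` for any word `h` and integer `m ≥ 2`. -/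
def Primitive (g : List Bool) : Prop := ∀ h m, 2 ≤ m → g ≠ listPow h m

/-- The Sturmian morphism on letters: `a ↦ a^p b`, `b ↦ a^{p'} b`
(`a` is `false`, `b` is `true`). -/
def alphaMap (p p' : ℕ) : Bool → List Bool
  | false => List.replicate p false ++ [true]
  | true  => List.replicate p' false ++ [true]

/-- The Sturmian morphism extended to words. -/
def alpha (p p' : ℕ) (w : List Bool) : List Bool := w.flatMap (alphaMap p p')

/-- A valid parameter pair: `p, p' ≥ 1` and `|p − p'| = 1`. -/
def ValidPair (p p' : ℕ) : Prop := 1 ≤ p ∧ 1 ≤ p' ∧ (p = p' + 1 ∨ p' = p + 1)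

/-- A finite binary word is balanced if any two equal-length factors have
`b`-counts differing by at most 1. -/
def BalancedFin (w : List Bool) : Prop :=
  ∀ u v : List Bool, u <:+: w → v <:+: w → u.length = v.length →
    u.count true ≤ v.count true + 1

/-- The factor of the infinite word `w` of length `n` starting at position `i`. -/
def infFactorAt (w : ℕ → Bool) (i n : ℕ) : List Bool :=
  (List.range n).map (fun k => w (i + k))

/-- `u` is a factor of the infinite word `w`. -/
def InfFactor (u : List Bool) (w : ℕ → Bool) : Prop :=
  ∃ i, u = infFactorAt w i u.length

/-- An infinite binary word is balanced if any two equal-length factors have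
`b`-counts differing by at most 1. -/
def BalancedInf (w : ℕ → Bool) : Prop :=
  ∀ u v : List Bool, InfFactor u w → InfFactor v w → u.length = v.length →
    u.count true ≤ v.count true + 1

/-- Ultimately periodic infinite word. -/
def UltPeriodic (w : ℕ → Bool) : Prop :=
  ∃ N q, 1 ≤ q ∧ ∀ n, N ≤ n → w (n + q) = w n

/-!
Since `α` is a morphism, `α(d)` and `α(g)` agree up to the images of the first letters `x ≠ y`
after `e`. Those images are `a^p b` and `a^{p'} b`; as `p ≠ p'`, they share exactly the prefix
`a^q` and then one of them continues with `a`, the other with `b`.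
-/

lemma List.exists_eq_append_cons_of_prefix {α : Type*} {e d : List α} (h : e <+: d)
    (hlt : e.length < d.length) : ∃ x t, d = e ++ x :: t ∧ d[e.length]? = some x := by
  obtain ⟨_ | ⟨x, t⟩, rfl⟩ := h
  · simp at hlt
  · exact ⟨x, t, rfl, by simp⟩

section Sturmian

variable {p p' : ℕ}

@[simp]
lemma alpha_append (u v : List Bool) : alpha p p' (u ++ v) = alpha p p' u ++ alpha p p' v := by
  simp [alpha]

@[simp]
lemma alpha_cons (x : Bool) (u : List Bool) :
    alpha p p' (x :: u) = alphaMap p p' x ++ alpha p p' u := by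
  simp [alpha]

lemma alphaMap_eq_replicate_append (x : Bool) :
    alphaMap p p' x = List.replicate (cond x p' p) false ++ [true] := by
  cases x <;> rfl

lemma replicate_min_prefix_alphaMap_append (x : Bool) (r : List Bool) :
    List.replicate (min p p') false <+: alphaMap p p' x ++ r := by
  have hle : min p p' ≤ cond x p' p := by cases x <;> simp
  rw [alphaMap_eq_replicate_append, List.append_assoc]
  refine List.IsPrefix.trans ⟨List.replicate (cond x p' p - min p p') false, ?_⟩
    (List.prefix_append _ _)
  rw [← List.replicate_add, Nat.add_sub_cancel' hle]

lemma getElem?_alphaMap_append_min (x : Bool) (r : List Bool) :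
    (alphaMap p p' x ++ r)[min p p']? = some (decide (min p p' = cond x p' p)) := by
  have hle : min p p' ≤ cond x p' p := by cases x <;> simp
  rw [alphaMap_eq_replicate_append, List.append_assoc]
  rcases hle.eq_or_lt with heq | hlt
  · rw [List.getElem?_append_right (by simp [heq])]
    simp [heq]
  · rw [List.getElem?_append_left (by simpa using hlt)]
    simp [hlt, hlt.ne]

lemma injective_decide_min_eq_cond (hpp : p ≠ p') :
    Function.Injective fun x : Bool => decide (min p p' = cond x p' p) := by
  intro x y
  cases x <;> cases y <;> simp <;> omega

lemma alpha_append_replicate_min_prefix (e t : List Bool) (x : Bool) :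
    alpha p p' e ++ List.replicate (min p p') false <+: alpha p p' (e ++ x :: t) := by
  rw [alpha_append, alpha_cons]
  exact (List.prefix_append_right_inj _).mpr (replicate_min_prefix_alphaMap_append x _)

lemma getElem?_alpha_append_cons (e t : List Bool) (x : Bool) :
    (alpha p p' (e ++ x :: t))[(alpha p p' e ++ List.replicate (min p p') false).length]? =
      some (decide (min p p' = cond x p' p)) := by
  rw [alpha_append, alpha_cons, List.length_append, List.length_replicate,
    List.getElem?_append_right (by omega), Nat.add_sub_cancel_left]
  exact getElem?_alphaMap_append_min x _

end Sturmian

theorem stmt12_general (p p' : ℕ)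
    (hne : p = p' + 1 ∨ p' = p + 1) (q : ℕ) (hq : q = min p p')
    (g d e : List Bool)
    (hed : e <+: d) (heg : e <+: g)
    (hlt : e.length < g.length) (hld : e.length < d.length)
    (hmax : d[e.length]? ≠ g[e.length]?) :
    (alpha p p' e ++ List.replicate q false) <+: alpha p p' d ∧
    (alpha p p' e ++ List.replicate q false) <+: alpha p p' g ∧
    (alpha p p' d)[(alpha p p' e ++ List.replicate q false).length]? ≠
      (alpha p p' g)[(alpha p p' e ++ List.replicate q false).length]? := by
  subst hq
  obtain ⟨x, td, rfl, hx⟩ := List.exists_eq_append_cons_of_prefix hed hld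
  obtain ⟨y, tg, rfl, hy⟩ := List.exists_eq_append_cons_of_prefix heg hlt
  have hxy : x ≠ y := by
    rintro rfl
    exact hmax (hx.trans hy.symm)
  refine ⟨alpha_append_replicate_min_prefix e td x, alpha_append_replicate_min_prefix e tg y, ?_⟩
  rw [getElem?_alpha_append_cons, getElem?_alpha_append_cons, Ne, Option.some_inj]
  exact (injective_decide_min_eq_cond (by omega)).ne hxy

/-- if e is the right extension of an occurrence of gᵏ in
S = c ++ gᵏ ++ d (e the longest common prefix of d and g, shorter than g),
then the right extension of the reflected repetition α(g)ᵏ in α(S) is exactly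
α(e) ++ a^q where q = min p p'. -/
theorem stmt12 (p p' : ℕ) (hp : 1 ≤ p) (hp' : 1 ≤ p')
    (hne : p = p' + 1 ∨ p' = p + 1) (q : ℕ) (hq : q = min p p')
    (S c g d e : List Bool) (k : ℕ) (hk : 2 ≤ k)
    (hS : S = c ++ listPow g k ++ d)
    (hed : e <+: d) (heg : e <+: g)
    (hlt : e.length < g.length) (hld : e.length < d.length)
    (hmax : d[e.length]? ≠ g[e.length]?) :
    (alpha p p' e ++ List.replicate q false) <+: alpha p p' d ∧
    (alpha p p' e ++ List.replicate q false) <+: alpha p p' g ∧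
    (alpha p p' d)[(alpha p p' e ++ List.replicate q false).length]? ≠
      (alpha p p' g)[(alpha p p' e ++ List.replicate q false).length]? :=
  stmt12_general p p' hne q hq g d e hed heg hlt hld hmax
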